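/- arXiv:2410.21785 — 2 statements merged into one kernel-verified Lean document; each statement's English description precedes it below -/
import Mathlib

section
/- For any non-negative real numbers $a$ and $d$ with $a + d < 1$ and any fixed $t \in (0, T]$, there exists a constant $C > 0$ (independent of $\rho$) such that for all $\rho \ge 1$, $\int_0^t e^{-\rho(t-r)} (t-r)^{-a} r^{-d}\,dr \le C \rho^{a+d-1}$. -/
open MeasureTheory Set Real

/-!
Put `m = t / 2`. Every `r ∈ (0, t)` has `r ≥ m` or `t - r ≥ m`, so the integrand is bounded by
`m^{-d} (t-r)^{-a} e^{-ρ(t-r)} + m^{-a} e^{-ρ m} r^{-d}`. The first term integrates to at most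
`m^{-d} Γ(1-a) ρ^{a-1}`, the second to `m^{-a} e^{-ρ m} t^{1-d}/(1-d)` with `e^{-ρ m} ≤ (ρ m)⁻¹`,
and for `ρ ≥ 1` both powers of `ρ` are at most `ρ^{a+d-1}`.
-/

lemma exp_neg_le_inv {x : ℝ} (hx : 0 < x) : exp (-x) ≤ x⁻¹ := by
  rw [exp_neg]
  exact inv_anti₀ hx (by linarith [add_one_le_exp x])

lemma integral_rpow_neg_mul_exp_neg_mul_le {a ρ x : ℝ} (ha : a < 1) (hρ : 0 < ρ) (hx : 0 ≤ x) :
    ∫ s in (0:ℝ)..x, s ^ (-a) * exp (-ρ * s) ≤ Gamma (1 - a) * ρ ^ (a - 1) := by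
  have key : ∫ s in Ioi (0:ℝ), s ^ (-a) * exp (-ρ * s) = Gamma (1 - a) * ρ ^ (a - 1) := by
    have h := integral_rpow_mul_exp_neg_mul_Ioi (sub_pos.2 ha) hρ
    rw [sub_sub_cancel_left, one_div, inv_rpow hρ.le, ← rpow_neg hρ.le, neg_sub] at h
    simpa only [neg_mul, mul_comm (Gamma _)] using h
  have hint : IntegrableOn (fun s ↦ s ^ (-a) * exp (-ρ * s)) (Ioi 0) :=
    .of_integral_ne_zero (by rw [key]; have := Gamma_pos_of_pos (sub_pos.2 ha); positivity)
  rw [intervalIntegral.integral_of_le hx, ← key]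
  refine setIntegral_mono_set hint ?_ Ioc_subset_Ioi_self.eventuallyLE
  filter_upwards [ae_restrict_mem measurableSet_Ioi] with s hs
  exact mul_nonneg (rpow_nonneg hs.le _) (exp_nonneg _)

lemma exp_mul_rpow_mul_rpow_le {a d ρ m x y : ℝ} (ha : 0 ≤ a) (hd : 0 ≤ d) (hρ : 0 ≤ ρ)
    (hm : 0 < m) (hx : 0 < x) (hy : 0 < y) (hmxy : m ≤ x ∨ m ≤ y) :
    exp (-ρ * x) * x ^ (-a) * y ^ (-d) ≤
      m ^ (-d) * (x ^ (-a) * exp (-ρ * x)) + m ^ (-a) * exp (-ρ * m) * y ^ (-d) := by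
  have hx' : 0 ≤ m ^ (-d) * (x ^ (-a) * exp (-ρ * x)) := by positivity
  have hy' : 0 ≤ m ^ (-a) * exp (-ρ * m) * y ^ (-d) := by positivity
  rcases hmxy with hmx | hmy
  · have hexp : exp (-ρ * x) ≤ exp (-ρ * m) := exp_le_exp.2 (by nlinarith)
    have hxa : x ^ (-a) ≤ m ^ (-a) := rpow_le_rpow_of_nonpos hm hmx (neg_nonpos.2 ha)
    calc exp (-ρ * x) * x ^ (-a) * y ^ (-d) ≤ m ^ (-a) * exp (-ρ * m) * y ^ (-d) := by
          rw [mul_comm (exp _)]; gcongr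
      _ ≤ _ := le_add_of_nonneg_left hx'
  · have hyd : y ^ (-d) ≤ m ^ (-d) := rpow_le_rpow_of_nonpos hm hmy (neg_nonpos.2 hd)
    calc exp (-ρ * x) * x ^ (-a) * y ^ (-d) ≤ m ^ (-d) * (x ^ (-a) * exp (-ρ * x)) := by
          rw [mul_comm, mul_comm (exp _)]; gcongr
      _ ≤ _ := le_add_of_nonneg_right hy'

lemma integral_exp_mul_rpow_mul_rpow_le {a d ρ t : ℝ} (ha : 0 ≤ a) (hd : 0 ≤ d) (ha1 : a < 1)
    (hd1 : d < 1) (hρ : 0 < ρ) (ht : 0 < t) :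
    ∫ r in (0:ℝ)..t, exp (-ρ * (t - r)) * (t - r) ^ (-a) * r ^ (-d) ≤
      (t / 2) ^ (-d) * (Gamma (1 - a) * ρ ^ (a - 1)) +
        (t / 2) ^ (-a) * exp (-ρ * (t / 2)) * (t ^ (1 - d) / (1 - d)) := by
  set m := t / 2 with hm_def
  have hm : 0 < m := by positivity
  set g : ℝ → ℝ := fun s ↦ s ^ (-a) * exp (-ρ * s)
  have hg : IntervalIntegrable g volume 0 t :=
    (intervalIntegral.intervalIntegrable_rpow' (by linarith)).mul_continuousOn (by fun_prop)
  have hg_sub : IntervalIntegrable (fun r ↦ g (t - r)) volume 0 t := by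
    simpa using (hg.comp_sub_left t).symm
  have hrpow : IntervalIntegrable (fun r : ℝ ↦ r ^ (-d)) volume 0 t :=
    intervalIntegral.intervalIntegrable_rpow' (by linarith)
  calc ∫ r in (0:ℝ)..t, exp (-ρ * (t - r)) * (t - r) ^ (-a) * r ^ (-d)
      ≤ ∫ r in (0:ℝ)..t, m ^ (-d) * g (t - r) + m ^ (-a) * exp (-ρ * m) * r ^ (-d) := by
        rw [intervalIntegral.integral_of_le ht.le, intervalIntegral.integral_of_le ht.le,
          integral_Ioc_eq_integral_Ioo, integral_Ioc_eq_integral_Ioo]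
        refine integral_mono_of_nonneg ?_ ?_ ?_
        · filter_upwards [ae_restrict_mem measurableSet_Ioo] with r hr
          have : 0 ≤ t - r := sub_nonneg.2 hr.2.le
          have := hr.1
          positivity
        · exact ((hg_sub.const_mul _).add (hrpow.const_mul _)).1.mono_set Ioo_subset_Ioc_self
        · filter_upwards [ae_restrict_mem measurableSet_Ioo] with r hr
          exact exp_mul_rpow_mul_rpow_le ha hd hρ.le hm (sub_pos.2 hr.2) hr.1
            (by by_contra! h; linarith [h.1, h.2, hm_def])
    _ = m ^ (-d) * (∫ s in (0:ℝ)..t, g s) +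
          m ^ (-a) * exp (-ρ * m) * (t ^ (1 - d) / (1 - d)) := by
        rw [intervalIntegral.integral_add (hg_sub.const_mul _) (hrpow.const_mul _),
          intervalIntegral.integral_const_mul, intervalIntegral.integral_const_mul,
          intervalIntegral.integral_comp_sub_left, integral_rpow (Or.inl (by linarith)),
          sub_self, sub_zero, zero_rpow (by linarith), sub_zero, neg_add_eq_sub]
    _ ≤ _ := by
        gcongr
        exact integral_rpow_neg_mul_exp_neg_mul_le ha1 hρ ht.le

theorem stmt_2 (a d t : ℝ) (ha : 0 ≤ a) (hd : 0 ≤ d) (had : a + d < 1) (ht : 0 < t) :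
    ∃ C > 0, ∀ ρ : ℝ, 1 ≤ ρ →
      ∫ r in (0:ℝ)..t, Real.exp (-ρ * (t - r)) * (t - r) ^ (-a) * r ^ (-d) ≤
        C * ρ ^ (a + d - 1) := by
  set m := t / 2
  have hm : 0 < m := by positivity
  have hd1 : 0 < 1 - d := by linarith
  have hΓ : 0 < Gamma (1 - a) := Gamma_pos_of_pos (by linarith)
  refine ⟨m ^ (-d) * Gamma (1 - a) + m ^ (-a) * m⁻¹ * (t ^ (1 - d) / (1 - d)), by positivity,
    fun ρ hρ ↦ ?_⟩
  have hρ0 : 0 < ρ := one_pos.trans_le hρ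
  have hexp : exp (-ρ * m) ≤ m⁻¹ * ρ ^ (a + d - 1) := calc
    exp (-ρ * m) ≤ (ρ * m)⁻¹ := by rw [neg_mul]; exact exp_neg_le_inv (by positivity)
    _ = m⁻¹ * ρ ^ (-1 : ℝ) := by rw [rpow_neg_one, mul_inv, mul_comm]
    _ ≤ m⁻¹ * ρ ^ (a + d - 1) := by gcongr; linarith
  have hpow : ρ ^ (a - 1) ≤ ρ ^ (a + d - 1) := rpow_le_rpow_of_exponent_le hρ (by linarith)
  calc _ ≤ m ^ (-d) * (Gamma (1 - a) * ρ ^ (a - 1)) +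
          m ^ (-a) * exp (-ρ * m) * (t ^ (1 - d) / (1 - d)) :=
        integral_exp_mul_rpow_mul_rpow_le ha hd (by linarith) (by linarith) hρ0 ht
    _ ≤ m ^ (-d) * (Gamma (1 - a) * ρ ^ (a + d - 1)) +
          m ^ (-a) * (m⁻¹ * ρ ^ (a + d - 1)) * (t ^ (1 - d) / (1 - d)) := by gcongr
    _ = _ := by ring
end

section
/- Let $V$ be a Hilbert space and $g : V \to L(V)$ a map whose Fréchet derivative $g' : V \to L(V, L(V))$ exists and is Lipschitz continuous with constant $M_g$, and such that $g'$ is bounded by $L_g$. Then there exists a constant $C > 0$ (depending only on $L_g, M_g$) such that for all $x_1, x_2, y_1, y_2 \in V$ and all unit vectors $e \in V$: $\|g(x_1)e - g(x_2)e - g(y_1)e + g(y_2)e\| \le C\|x_1 - x_2 - y_1 + y_2\| + C\|x_1 - x_2\|\big(\|x_1 - y_1\| + \|x_2 - y_2\|\big)$. -/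
/-! The double difference splits as
`(φ (x₁ - x₂) - φ 0) + (g (y₂ + (x₁ - x₂)) - g y₁)` with `φ z = g (x₂ + z) - g (y₂ + z)`.
The derivative of `φ` at `z` is `g' (x₂ + z) - g' (y₂ + z)`, of norm at most `M_g ‖x₂ - y₂‖`, so
the mean value inequality bounds the first term by `M_g ‖x₂ - y₂‖ ‖x₁ - x₂‖`; the second term is
at most `L_g ‖x₁ - x₂ - y₁ + y₂‖` because `g` is `L_g`-Lipschitz. -/

section DoubleDifference

variable {E F : Type*} [NormedAddCommGroup E] [NormedSpace ℝ E]
  [NormedAddCommGroup F] [NormedSpace ℝ F]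

theorem norm_image_sub_le_of_forall_norm_hasFDerivAt_le {f : E → F} {f' : E → E →L[ℝ] F}
    {C : ℝ} (hf : ∀ x, HasFDerivAt f (f' x) x) (hbound : ∀ x, ‖f' x‖ ≤ C) (x y : E) :
    ‖f x - f y‖ ≤ C * ‖x - y‖ :=
  convex_univ.norm_image_sub_le_of_norm_hasFDerivWithin_le
    (fun z _ => (hf z).hasFDerivWithinAt) (fun z _ => hbound z) (Set.mem_univ y) (Set.mem_univ x)

theorem norm_image_sub_sub_sub_add_le {f : E → F} {f' : E → E →L[ℝ] F} {L M : ℝ}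
    (hf : ∀ x, HasFDerivAt f (f' x) x) (hbound : ∀ x, ‖f' x‖ ≤ L)
    (hlip : ∀ a b, ‖f' a - f' b‖ ≤ M * ‖a - b‖) (x₁ x₂ y₁ y₂ : E) :
    ‖f x₁ - f x₂ - f y₁ + f y₂‖ ≤
      L * ‖x₁ - x₂ - y₁ + y₂‖ + M * ‖x₂ - y₂‖ * ‖x₁ - x₂‖ := by
  set u := x₁ - x₂
  have hφ : ∀ z, HasFDerivAt (fun z => f (x₂ + z) - f (y₂ + z))
      (f' (x₂ + z) - f' (y₂ + z)) z := fun z =>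
    ((hasFDerivAt_comp_add_left x₂).mpr (hf _)).sub ((hasFDerivAt_comp_add_left y₂).mpr (hf _))
  have hφ_bound : ∀ z, ‖f' (x₂ + z) - f' (y₂ + z)‖ ≤ M * ‖x₂ - y₂‖ := fun z => by
    simpa using hlip (x₂ + z) (y₂ + z)
  have hφ_incr := norm_image_sub_le_of_forall_norm_hasFDerivAt_le hφ hφ_bound u 0
  have hf_incr := norm_image_sub_le_of_forall_norm_hasFDerivAt_le hf hbound (y₂ + u) y₁
  have hsplit : f x₁ - f x₂ - f y₁ + f y₂ =
      ((f (x₂ + u) - f (y₂ + u)) - (f (x₂ + 0) - f (y₂ + 0))) + (f (y₂ + u) - f y₁) := by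
    simp only [u, add_zero, add_sub_cancel]
    abel
  have hu : y₂ + u - y₁ = x₁ - x₂ - y₁ + y₂ := by
    simp only [u]
    abel
  rw [hu] at hf_incr
  rw [sub_zero] at hφ_incr
  rw [hsplit]
  exact (norm_add_le _ _).trans (by linarith)

end DoubleDifference

/-- If `g : V → L(V)` has a Lipschitz continuous and bounded Fréchet derivative, then for
unit vectors `e`:
`‖g(x₁)e - g(x₂)e - g(y₁)e + g(y₂)e‖ ≤ C‖x₁-x₂-y₁+y₂‖ + C‖x₁-x₂‖(‖x₁-y₁‖+‖x₂-y₂‖)`. -/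
theorem stmt_9 {V : Type*} [NormedAddCommGroup V] [InnerProductSpace ℝ V]
    (g : V → V →L[ℝ] V) (g' : V → V →L[ℝ] (V →L[ℝ] V)) (Lg Mg : ℝ)
    (hderiv : ∀ x, HasFDerivAt g (g' x) x)
    (hbound : ∀ x, ‖g' x‖ ≤ Lg)
    (hlip : ∀ x₁ x₂ : V, ∀ e : V, ‖e‖ = 1 →
      ‖g' x₁ e - g' x₂ e‖ ≤ Mg * ‖x₁ - x₂‖) :
    ∃ C > 0, ∀ x₁ x₂ y₁ y₂ e : V, ‖e‖ = 1 →
      ‖g x₁ e - g x₂ e - g y₁ e + g y₂ e‖ ≤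
        C * ‖x₁ - x₂ - y₁ + y₂‖ + C * ‖x₁ - x₂‖ * (‖x₁ - y₁‖ + ‖x₂ - y₂‖) := by
  have hLg : 0 ≤ Lg := (norm_nonneg (g' 0)).trans (hbound 0)
  have hlip_op : ∀ a b, ‖g' a - g' b‖ ≤ |Mg| * ‖a - b‖ := fun a b =>
    ContinuousLinearMap.opNorm_le_of_unit_norm (by positivity) fun e he =>
      (hlip a b e he).trans (by gcongr; exact le_abs_self Mg)
  refine ⟨Lg + |Mg| + 1, by positivity, fun x₁ x₂ y₁ y₂ e he => ?_⟩
  have hdd := norm_image_sub_sub_sub_add_le hderiv hbound hlip_op x₁ x₂ y₁ y₂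
  have happly : ‖g x₁ e - g x₂ e - g y₁ e + g y₂ e‖ ≤ ‖g x₁ - g x₂ - g y₁ + g y₂‖ := by
    simpa [he] using (g x₁ - g x₂ - g y₁ + g y₂).le_opNorm e
  refine happly.trans (hdd.trans ?_)
  gcongr ?_ + ?_
  · gcongr
    linarith [abs_nonneg Mg]
  · calc |Mg| * ‖x₂ - y₂‖ * ‖x₁ - x₂‖ = |Mg| * ‖x₁ - x₂‖ * ‖x₂ - y₂‖ := by ring
      _ ≤ (Lg + |Mg| + 1) * ‖x₁ - x₂‖ * (‖x₁ - y₁‖ + ‖x₂ - y₂‖) := by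
        gcongr
        · linarith
        · exact le_add_of_nonneg_left (norm_nonneg _)
end
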